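/- For every α > 0 and all real x and y, the function I^{(α)}(x,y) := (1/(4π^{3/2})) ∫_{−∞}^{+∞} exp( (1/12)(1−iu)³ − (1/2)(x+y)(1−iu) − (1/4)(x−y)²/(1−iu) ) / (1−iu)^{α+1/2} du satisfies (1/(x−y))·(∂/∂y − ∂/∂x) I^{(α)}(x,y) = I^{(α+1)}(x,y) for x ≠ y. -/

import Mathlib

/-!
With `z = 1 - iu`, the integrand of `I^{(α)}` is `exp φ(x,y,z) / z^{α+1/2}`, and the phase `φ` is
symmetric in `x, y` with `∂_y φ - ∂_x φ = (x - y)/z`. Hence `(∂_y - ∂_x)` of the integrand is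
`(x - y)` times the integrand of `I^{(α+1)}`. Differentiating under the integral sign is justified
by `Re φ ≤ 1/12 - (x+y)/2 - u²/4` and `‖z^{α+1/2}‖ ≥ 1`, which give a Gaussian domination locally
uniform in `y`.
-/

open Complex

/-- `I^{(α)}(x,y) = (1/(4π^{3/2})) ∫_ℝ exp((1/12)(1−iu)³ − (1/2)(x+y)(1−iu)
    − (1/4)(x−y)²/(1−iu)) / (1−iu)^{α+1/2} du`, with principal-branch powers. -/
noncomputable def Ifun (α : ℝ) (x y : ℝ) : ℂ :=
  (1 / (4 * (Real.pi : ℂ) ^ ((3 : ℂ) / 2))) *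
    ∫ u : ℝ, Complex.exp ((1 / 12) * (1 - Complex.I * u) ^ 3
        - (1 / 2) * ((x : ℂ) + y) * (1 - Complex.I * u)
        - (1 / 4) * ((x : ℂ) - y) ^ 2 / (1 - Complex.I * u))
      / (1 - Complex.I * u) ^ ((α : ℂ) + 1 / 2)

open MeasureTheory

lemma integrable_exp_sub_mul_sq (c : ℝ) {b : ℝ} (hb : 0 < b) :
    Integrable fun u : ℝ => Real.exp (c - b * u ^ 2) := by
  simpa [sub_eq_add_neg, Real.exp_add] using (integrable_exp_neg_mul_sq hb).const_mul (Real.exp c)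

lemma integrable_add_abs_mul_exp_sub_mul_sq (a c : ℝ) {b : ℝ} (hb : 0 < b) :
    Integrable fun u : ℝ => (a + |u|) * Real.exp (c - b * u ^ 2) := by
  have h := ((integrable_mul_exp_neg_mul_sq hb).norm.const_mul (Real.exp c)).add
    ((integrable_exp_sub_mul_sq c hb).const_mul a)
  refine h.congr (ae_of_all _ fun u => ?_)
  simp only [Pi.add_apply, norm_mul, Real.norm_eq_abs, abs_of_pos (Real.exp_pos _),
    sub_eq_add_neg, Real.exp_add, neg_mul]
  ring

lemma one_le_norm_cpow_ofReal {z : ℂ} (hz : 1 ≤ ‖z‖) {s : ℝ} (hs : 0 ≤ s) :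
    1 ≤ ‖z ^ (s : ℂ)‖ := by
  rw [norm_cpow_real]
  exact Real.one_le_rpow hz hs

lemma one_le_norm_one_sub_I_mul (u : ℝ) : 1 ≤ ‖1 - I * u‖ := by
  simpa using abs_re_le_norm (1 - I * u)

lemma one_sub_I_mul_ne_zero (u : ℝ) : 1 - I * u ≠ 0 :=
  norm_pos_iff.1 (one_pos.trans_le (one_le_norm_one_sub_I_mul u))

lemma norm_one_sub_I_mul_le (u : ℝ) : ‖1 - I * u‖ ≤ 1 + |u| := by
  simpa using norm_sub_le (1 : ℂ) (I * u)

noncomputable def ifunPhase (x y : ℝ) (z : ℂ) : ℂ :=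
  (1 / 12) * z ^ 3 - (1 / 2) * ((x : ℂ) + y) * z - (1 / 4) * ((x : ℂ) - y) ^ 2 / z

noncomputable def ifunPhaseDeriv (x y : ℝ) (z : ℂ) : ℂ :=
  -z / 2 + ((x : ℂ) - y) / (2 * z)

noncomputable def ifunIntegrand (α x y u : ℝ) : ℂ :=
  exp (ifunPhase x y (1 - I * u)) / (1 - I * u) ^ ((α : ℂ) + 1 / 2)

lemma Ifun_eq (α x y : ℝ) :
    Ifun α x y = 1 / (4 * (Real.pi : ℂ) ^ ((3 : ℂ) / 2)) * ∫ u, ifunIntegrand α x y u := rfl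

lemma ifunPhase_comm (x y : ℝ) (z : ℂ) : ifunPhase x y z = ifunPhase y x z := by
  unfold ifunPhase; ring

lemma ifunIntegrand_comm (α x y u : ℝ) : ifunIntegrand α x y u = ifunIntegrand α y x u := by
  rw [ifunIntegrand, ifunPhase_comm, ifunIntegrand]

lemma Ifun_comm (α x y : ℝ) : Ifun α x y = Ifun α y x := by
  simp_rw [Ifun_eq, ifunIntegrand_comm α x y]

lemma hasDerivAt_ifunPhase_right (x y : ℝ) (z : ℂ) :
    HasDerivAt (fun y' : ℝ => ifunPhase x y' z) (ifunPhaseDeriv x y z) y := by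
  have hy : HasDerivAt (fun y' : ℝ => (y' : ℂ)) 1 y := (hasDerivAt_id y).ofReal_comp
  have h := ((hasDerivAt_const y ((1 / 12) * z ^ 3)).sub
    (((hy.const_add (x : ℂ)).const_mul (1 / 2)).mul_const z)).sub
    ((((hy.const_sub (x : ℂ)).pow 2).const_mul (1 / 4)).div_const z)
  refine h.congr_deriv ?_
  unfold ifunPhaseDeriv
  ring

lemma re_ifunPhase_le (x y u : ℝ) :
    (ifunPhase x y (1 - I * u)).re ≤ 1 / 12 - (x + y) / 2 - 1 / 4 * u ^ 2 := by
  have hre : (ifunPhase x y (1 - I * u)).re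
      = (1 - 3 * u ^ 2) / 12 - (x + y) / 2 - (x - y) ^ 2 / (4 * (1 + u ^ 2)) := by
    have : (1 : ℝ) + u ^ 2 ≠ 0 := by positivity
    simp [ifunPhase, div_re, normSq_apply, pow_succ]
    field_simp
    ring
  rw [hre]
  have : 0 ≤ (x - y) ^ 2 / (4 * (1 + u ^ 2)) := by positivity
  linarith

lemma norm_ifunIntegrand_le {α : ℝ} (hα : -1 / 2 ≤ α) (x y u : ℝ) :
    ‖ifunIntegrand α x y u‖ ≤ Real.exp (1 / 12 - (x + y) / 2 - 1 / 4 * u ^ 2) := by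
  have hpow : 1 ≤ ‖(1 - I * u) ^ ((α : ℂ) + 1 / 2)‖ := by
    simpa using one_le_norm_cpow_ofReal (one_le_norm_one_sub_I_mul u)
      (show 0 ≤ α + 1 / 2 by linarith)
  calc ‖ifunIntegrand α x y u‖ ≤ ‖exp (ifunPhase x y (1 - I * u))‖ := by
        rw [ifunIntegrand, norm_div]
        exact div_le_self (norm_nonneg _) hpow
    _ ≤ _ := by
        rw [norm_exp]
        exact Real.exp_le_exp.2 (re_ifunPhase_le x y u)

lemma norm_ifunPhaseDeriv_le (x y u : ℝ) :
    ‖ifunPhaseDeriv x y (1 - I * u)‖ ≤ 1 + |u| + |x - y| := by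
  have hz := one_le_norm_one_sub_I_mul u
  calc ‖ifunPhaseDeriv x y (1 - I * u)‖
      ≤ ‖1 - I * u‖ / 2 + |x - y| / (2 * ‖1 - I * u‖) := by
        refine (norm_add_le _ _).trans_eq ?_
        rw [norm_div, norm_div, norm_neg, norm_mul, ← ofReal_sub, norm_real, Real.norm_eq_abs]
        norm_num
    _ ≤ (1 + |u|) / 2 + |x - y| / 2 := by
        gcongr
        · exact norm_one_sub_I_mul_le u
        · linarith
    _ ≤ 1 + |u| + |x - y| := by linarith [abs_nonneg u, abs_nonneg (x - y)]

lemma continuous_ifunIntegrand (α x y : ℝ) : Continuous (ifunIntegrand α x y) := by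
  have hz : Continuous fun u : ℝ => 1 - I * u := by fun_prop
  refine Continuous.div ?_ (hz.cpow continuous_const fun u => Or.inl (by simp)) fun u => ?_
  · exact (((continuous_const.mul (hz.pow 3)).sub (continuous_const.mul hz)).sub
      (continuous_const.div hz one_sub_I_mul_ne_zero)).cexp
  · simp [one_sub_I_mul_ne_zero u]

lemma continuous_ifunPhaseDeriv (x y : ℝ) :
    Continuous fun u : ℝ => ifunPhaseDeriv x y (1 - I * u) := by
  have hz : Continuous fun u : ℝ => 1 - I * u := by fun_prop
  exact (hz.neg.div_const 2).add
    (continuous_const.div (continuous_const.mul hz) fun u => by simp [one_sub_I_mul_ne_zero u])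

lemma integrable_ifunIntegrand {α : ℝ} (hα : -1 / 2 ≤ α) (x y : ℝ) :
    Integrable (ifunIntegrand α x y) :=
  (integrable_exp_sub_mul_sq _ (by norm_num : (0 : ℝ) < 1 / 4)).mono'
    (continuous_ifunIntegrand α x y).aestronglyMeasurable
    (ae_of_all _ (norm_ifunIntegrand_le hα x y))

lemma norm_ifunPhaseDeriv_mul_ifunIntegrand_le {α : ℝ} (hα : -1 / 2 ≤ α) {x y y' : ℝ}
    (hy' : |y' - y| < 1) (u : ℝ) :
    ‖ifunPhaseDeriv x y' (1 - I * u) * ifunIntegrand α x y' u‖ ≤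
      (2 + |x - y| + |u|) * Real.exp (7 / 12 - (x + y) / 2 - 1 / 4 * u ^ 2) := by
  have hy'' := abs_lt.1 hy'
  rw [norm_mul]
  refine mul_le_mul ?_ ?_ (norm_nonneg _) (by positivity)
  · have hxy' := abs_sub_le x y y'
    rw [abs_sub_comm y y'] at hxy'
    linarith [norm_ifunPhaseDeriv_le x y' u]
  · refine (norm_ifunIntegrand_le hα x y' u).trans (Real.exp_le_exp.2 ?_)
    linarith

lemma hasDerivAt_ifunIntegrand_right (α x y u : ℝ) :
    HasDerivAt (fun y' => ifunIntegrand α x y' u)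
      (ifunPhaseDeriv x y (1 - I * u) * ifunIntegrand α x y u) y := by
  refine ((hasDerivAt_ifunPhase_right x y (1 - I * u)).cexp.div_const _).congr_deriv ?_
  rw [ifunIntegrand]
  ring

lemma hasDerivAt_integral_ifunIntegrand {α : ℝ} (hα : -1 / 2 ≤ α) (x y : ℝ) :
    Integrable (fun u : ℝ => ifunPhaseDeriv x y (1 - I * u) * ifunIntegrand α x y u) ∧
      HasDerivAt (fun y' => ∫ u, ifunIntegrand α x y' u)
        (∫ u : ℝ, ifunPhaseDeriv x y (1 - I * u) * ifunIntegrand α x y u) y :=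
  hasDerivAt_integral_of_dominated_loc_of_deriv_le (Metric.ball_mem_nhds y one_pos)
    (F' := fun y' u => ifunPhaseDeriv x y' (1 - I * u) * ifunIntegrand α x y' u)
    (.of_forall fun y' => (continuous_ifunIntegrand α x y').aestronglyMeasurable)
    (integrable_ifunIntegrand hα x y)
    ((continuous_ifunPhaseDeriv x y).mul (continuous_ifunIntegrand α x y)).aestronglyMeasurable
    (ae_of_all _ fun u y' hy' =>
      norm_ifunPhaseDeriv_mul_ifunIntegrand_le hα (by simpa [Real.dist_eq] using hy') u)
    (integrable_add_abs_mul_exp_sub_mul_sq _ _ (by norm_num))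
    (ae_of_all _ fun u y' _ => hasDerivAt_ifunIntegrand_right α x y' u)

lemma ifunIntegrand_div (α x y u : ℝ) :
    ifunIntegrand α x y u / (1 - I * u) = ifunIntegrand (α + 1) x y u := by
  have hexp : ((α + 1 : ℝ) : ℂ) + 1 / 2 = ((α : ℂ) + 1 / 2) + 1 := by push_cast; ring
  rw [ifunIntegrand, ifunIntegrand, div_div, hexp, cpow_add _ 1 (one_sub_I_mul_ne_zero u), cpow_one]

lemma ifunPhaseDeriv_sub_mul_ifunIntegrand (α x y u : ℝ) :
    ifunPhaseDeriv x y (1 - I * u) * ifunIntegrand α x y u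
        - ifunPhaseDeriv y x (1 - I * u) * ifunIntegrand α y x u
      = ((x : ℂ) - y) * ifunIntegrand (α + 1) x y u := by
  have hz := one_sub_I_mul_ne_zero u
  rw [← ifunIntegrand_comm α x y, ← ifunIntegrand_div, ifunPhaseDeriv, ifunPhaseDeriv]
  field_simp
  ring

lemma hasDerivAt_Ifun_right {α : ℝ} (hα : -1 / 2 ≤ α) (x y : ℝ) :
    HasDerivAt (fun y' => Ifun α x y')
      (1 / (4 * (Real.pi : ℂ) ^ ((3 : ℂ) / 2)) *
        ∫ u : ℝ, ifunPhaseDeriv x y (1 - I * u) * ifunIntegrand α x y u) y :=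
  (hasDerivAt_integral_ifunIntegrand hα x y).2.const_mul _

/-- For `α > 0` and `x ≠ y`, `(1/(x−y))·(∂/∂y − ∂/∂x) I^{(α)}(x,y) = I^{(α+1)}(x,y)`. -/
theorem Ifun_step (α : ℝ) (hα : 0 < α) (x y : ℝ) (hxy : x ≠ y) :
    (((1 / (x - y) : ℝ)) : ℂ) *
        (deriv (fun y' : ℝ => Ifun α x y') y - deriv (fun x' : ℝ => Ifun α x' y) x)
      = Ifun (α + 1) x y := by
  have hα' : -1 / 2 ≤ α := by linarith
  have hxy' : (x : ℂ) - y ≠ 0 := sub_ne_zero.2 (ofReal_injective.ne hxy)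
  simp_rw [Ifun_comm α _ y]
  rw [(hasDerivAt_Ifun_right hα' x y).deriv, (hasDerivAt_Ifun_right hα' y x).deriv, ← mul_sub,
    ← integral_sub (hasDerivAt_integral_ifunIntegrand hα' x y).1
      (hasDerivAt_integral_ifunIntegrand hα' y x).1]
  simp_rw [ifunPhaseDeriv_sub_mul_ifunIntegrand, integral_const_mul, Ifun_eq]
  push_cast
  field_simp
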